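/- arXiv:2307.09710 — 3 statements merged into one kernel-verified Lean document; each statement's English description precedes it below -/
import Mathlib

section
/- Let μ₁, μ₂, μ₃ be probability measures on ℝ with finite first moments, and let c ∈ C_lin(ℝ²). For the set I of intermediate marginals that do not improve the lower price bound, i.e., I := { μ₂ : μ₁ ⪯ μ₂ ⪯ μ₃ and inf over ℚ ∈ M(μ₁,μ₂,μ₃) of E_ℚ[c(S₁,S₃)] = inf over ℚ ∈ M(μ₁,μ₃) of E_ℚ[c(S₁,S₃)] }, the set I is convex: if ν, ν' ∈ I and λ ∈ (0,1), then λν + (1−λ)ν' ∈ I. -/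
open MeasureTheory

def BddCont (f : ℝ → ℝ) : Prop :=
  Continuous f ∧ ∃ M : ℝ, ∀ x, |f x| ≤ M

def BddCont2 (f : ℝ × ℝ → ℝ) : Prop :=
  Continuous f ∧ ∃ M : ℝ, ∀ p, |f p| ≤ M

/-- A three-period martingale measure on `ℝ³` with prescribed marginals. -/
def IsMM3 (Q : Measure (ℝ × ℝ × ℝ)) (μ₁ μ₂ μ₃ : Measure ℝ) : Prop :=
  IsProbabilityMeasure Q ∧
  Q.map (fun p => p.1) = μ₁ ∧ Q.map (fun p => p.2.1) = μ₂ ∧ Q.map (fun p => p.2.2) = μ₃ ∧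
  Integrable (fun p : ℝ × ℝ × ℝ => p.1) Q ∧
  Integrable (fun p : ℝ × ℝ × ℝ => p.2.1) Q ∧
  Integrable (fun p : ℝ × ℝ × ℝ => p.2.2) Q ∧
  (∀ Δ : ℝ → ℝ, BddCont Δ → ∫ p : ℝ × ℝ × ℝ, Δ p.1 * (p.2.1 - p.1) ∂Q = 0) ∧
  (∀ Δ : ℝ × ℝ → ℝ, BddCont2 Δ →
    ∫ p : ℝ × ℝ × ℝ, Δ (p.1, p.2.1) * (p.2.2 - p.2.1) ∂Q = 0)

/-- A two-period martingale measure on `ℝ²` with prescribed marginals. -/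
def IsMM2 (Q : Measure (ℝ × ℝ)) (μ₁ μ₃ : Measure ℝ) : Prop :=
  IsProbabilityMeasure Q ∧
  Q.map Prod.fst = μ₁ ∧ Q.map Prod.snd = μ₃ ∧
  Integrable (fun p : ℝ × ℝ => p.1) Q ∧ Integrable (fun p : ℝ × ℝ => p.2) Q ∧
  ∀ Δ : ℝ → ℝ, BddCont Δ → ∫ p : ℝ × ℝ, Δ p.1 * (p.2 - p.1) ∂Q = 0
/-- Continuous functions of linear growth on `ℝ²`. -/
def CLin2 (c : ℝ × ℝ → ℝ) : Prop :=
  Continuous c ∧ ∃ L : ℝ, ∀ p : ℝ × ℝ, |c p| ≤ L * (1 + |p.1| + |p.2|)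

/-- Convex order of probability measures on `ℝ`. -/
def ConvOrder (μ ν : Measure ℝ) : Prop :=
  ∀ f : ℝ → ℝ, ConvexOn ℝ Set.univ f → Integrable f μ → Integrable f ν →
    ∫ x, f x ∂μ ≤ ∫ x, f x ∂ν

/-- Values of the three-marginal MOT problem for a payoff depending on the
first and third coordinates. -/
def MotVal3 (μ₁ μ₂ μ₃ : Measure ℝ) (c : ℝ × ℝ → ℝ) : Set ℝ :=
  {r : ℝ | ∃ Q : Measure (ℝ × ℝ × ℝ), IsMM3 Q μ₁ μ₂ μ₃ ∧
    r = ∫ p : ℝ × ℝ × ℝ, c (p.1, p.2.2) ∂Q}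

/-- Values of the two-marginal MOT problem. -/
def MotVal2 (μ₁ μ₃ : Measure ℝ) (c : ℝ × ℝ → ℝ) : Set ℝ :=
  {r : ℝ | ∃ Q : Measure (ℝ × ℝ), IsMM2 Q μ₁ μ₃ ∧ r = ∫ p : ℝ × ℝ, c p ∂Q}

/-!
Mixing optimal martingale measures for `ν` and `ν'` with weights `λ, 1 - λ` gives a martingale
measure with middle marginal `λν + (1 - λ)ν'` whose cost is again the two-marginal infimum. Since
forgetting the middle coordinate turns a three-period martingale measure into a two-period one with
the same cost, no three-period measure can do better; linear growth of `c` keeps all these costs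
bounded below. Convex order is preserved under mixtures because integrals are linear in the measure.
-/

namespace MeasureTheory

namespace Measure

variable {α β : Type*} [MeasurableSpace α] [MeasurableSpace β] {lam : ℝ} {μ ν : Measure α}

noncomputable def mixture (lam : ℝ) (μ ν : Measure α) : Measure α :=
  ENNReal.ofReal lam • μ + ENNReal.ofReal (1 - lam) • ν

lemma mixture_self (hlam : lam ∈ Set.Icc (0 : ℝ) 1) (μ : Measure α) : mixture lam μ μ = μ := by
  rw [mixture, ← add_smul, ← ENNReal.ofReal_add hlam.1 (sub_nonneg.2 hlam.2), add_sub_cancel,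
    ENNReal.ofReal_one, one_smul]

lemma map_mixture {g : α → β} (hg : Measurable g) :
    (mixture lam μ ν).map g = mixture lam (μ.map g) (ν.map g) := by
  rw [mixture, mixture, Measure.map_add _ _ hg, Measure.map_smul, Measure.map_smul]

lemma isProbabilityMeasure_mixture [IsProbabilityMeasure μ] [IsProbabilityMeasure ν]
    (hlam : lam ∈ Set.Icc (0 : ℝ) 1) : IsProbabilityMeasure (mixture lam μ ν) := by
  constructor
  rw [mixture, add_apply, smul_apply, smul_apply, measure_univ, measure_univ, smul_eq_mul,
    smul_eq_mul, mul_one, mul_one, ← ENNReal.ofReal_add hlam.1 (sub_nonneg.2 hlam.2),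
    add_sub_cancel, ENNReal.ofReal_one]

end Measure

section Mixture

variable {α E : Type*} [MeasurableSpace α] [NormedAddCommGroup E] {lam : ℝ} {μ ν : Measure α}
  {f : α → E}

lemma Integrable.mixture (hμ : Integrable f μ) (hν : Integrable f ν) :
    Integrable f (Measure.mixture lam μ ν) :=
  (hμ.smul_measure ENNReal.ofReal_ne_top).add_measure (hν.smul_measure ENNReal.ofReal_ne_top)

lemma Integrable.of_mixture (hlam : lam ∈ Set.Ioo (0 : ℝ) 1)
    (h : Integrable f (Measure.mixture lam μ ν)) : Integrable f μ ∧ Integrable f ν := by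
  obtain ⟨hμ, hν⟩ := integrable_add_measure.mp h
  exact ⟨(integrable_smul_measure (by simpa using hlam.1) ENNReal.ofReal_ne_top).mp hμ,
    (integrable_smul_measure (by simpa using hlam.2) ENNReal.ofReal_ne_top).mp hν⟩

lemma integral_mixture [NormedSpace ℝ E] (hlam : lam ∈ Set.Icc (0 : ℝ) 1)
    (hμ : Integrable f μ) (hν : Integrable f ν) :
    ∫ x, f x ∂Measure.mixture lam μ ν = lam • ∫ x, f x ∂μ + (1 - lam) • ∫ x, f x ∂ν := by
  rw [Measure.mixture, integral_add_measure (hμ.smul_measure ENNReal.ofReal_ne_top)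
    (hν.smul_measure ENNReal.ofReal_ne_top), integral_smul_measure, integral_smul_measure,
    ENNReal.toReal_ofReal hlam.1, ENNReal.toReal_ofReal (sub_nonneg.2 hlam.2)]

end Mixture

lemma Integrable.continuous_bounded_comp_mul {α β : Type*} [MeasurableSpace α]
    [TopologicalSpace β] [MeasurableSpace β] [OpensMeasurableSpace β] {Q : Measure α}
    {Δ : β → ℝ} {M : ℝ} {φ : α → β} {g : α → ℝ} (hg : Integrable g Q) (hΔ : Continuous Δ)
    (hM : ∀ y, |Δ y| ≤ M) (hφ : Measurable φ) :
    Integrable (fun x => Δ (φ x) * g x) Q :=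
  hg.bdd_mul (hΔ.measurable.comp hφ).aestronglyMeasurable (.of_forall fun x => hM (φ x))

end MeasureTheory

open MeasureTheory.Measure (mixture)

lemma ConvOrder.mixture {lam : ℝ} {μ μ' ν ν' : Measure ℝ} (hlam : lam ∈ Set.Ioo (0 : ℝ) 1)
    (h : ConvOrder μ ν) (h' : ConvOrder μ' ν') :
    ConvOrder (mixture lam μ μ') (mixture lam ν ν') := by
  intro f hf hfμ hfν
  obtain ⟨hfμ, hfμ'⟩ := hfμ.of_mixture hlam
  obtain ⟨hfν, hfν'⟩ := hfν.of_mixture hlam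
  rw [integral_mixture (Set.Ioo_subset_Icc_self hlam) hfμ hfμ',
    integral_mixture (Set.Ioo_subset_Icc_self hlam) hfν hfν']
  exact add_le_add (smul_le_smul_of_nonneg_left (h f hf hfμ hfν) hlam.1.le)
    (smul_le_smul_of_nonneg_left (h' f hf hfμ' hfν') (sub_nonneg.2 hlam.2.le))

section Martingale

variable {Q : Measure (ℝ × ℝ × ℝ)} {μ₁ μ₂ μ₃ : Measure ℝ}

lemma IsMM3.integrable_mul_increment₁₂ (hQ : IsMM3 Q μ₁ μ₂ μ₃) {Δ : ℝ → ℝ} (hΔ : BddCont Δ) :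
    Integrable (fun p : ℝ × ℝ × ℝ => Δ p.1 * (p.2.1 - p.1)) Q := by
  obtain ⟨-, -, -, -, hi₁, hi₂, -⟩ := hQ
  obtain ⟨hΔc, M, hM⟩ := hΔ
  exact (hi₂.sub hi₁).continuous_bounded_comp_mul hΔc hM measurable_fst

lemma IsMM3.integrable_mul_increment₂₃ (hQ : IsMM3 Q μ₁ μ₂ μ₃) {Δ : ℝ × ℝ → ℝ}
    (hΔ : BddCont2 Δ) :
    Integrable (fun p : ℝ × ℝ × ℝ => Δ (p.1, p.2.1) * (p.2.2 - p.2.1)) Q := by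
  obtain ⟨-, -, -, -, -, hi₂, hi₃, -⟩ := hQ
  obtain ⟨hΔc, M, hM⟩ := hΔ
  exact (hi₃.sub hi₂).continuous_bounded_comp_mul hΔc hM (by fun_prop)

lemma IsMM3.mixture {lam : ℝ} {Q' : Measure (ℝ × ℝ × ℝ)} {μ₁' μ₂' μ₃' : Measure ℝ}
    (hlam : lam ∈ Set.Icc (0 : ℝ) 1) (hQ : IsMM3 Q μ₁ μ₂ μ₃) (hQ' : IsMM3 Q' μ₁' μ₂' μ₃') :
    IsMM3 (mixture lam Q Q') (mixture lam μ₁ μ₁') (mixture lam μ₂ μ₂')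
      (mixture lam μ₃ μ₃') := by
  obtain ⟨hP, hm₁, hm₂, hm₃, hi₁, hi₂, hi₃, hmart₁, hmart₂⟩ := id hQ
  obtain ⟨hP', hm₁', hm₂', hm₃', hi₁', hi₂', hi₃', hmart₁', hmart₂'⟩ := id hQ'
  refine ⟨Measure.isProbabilityMeasure_mixture hlam, ?_, ?_, ?_, hi₁.mixture hi₁',
    hi₂.mixture hi₂', hi₃.mixture hi₃', fun Δ hΔ => ?_, fun Δ hΔ => ?_⟩
  · rw [Measure.map_mixture (by fun_prop), hm₁, hm₁']
  · rw [Measure.map_mixture (by fun_prop), hm₂, hm₂']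
  · rw [Measure.map_mixture (by fun_prop), hm₃, hm₃']
  · rw [integral_mixture hlam (hQ.integrable_mul_increment₁₂ hΔ)
      (hQ'.integrable_mul_increment₁₂ hΔ), hmart₁ Δ hΔ, hmart₁' Δ hΔ, smul_zero, smul_zero,
      add_zero]
  · rw [integral_mixture hlam (hQ.integrable_mul_increment₂₃ hΔ)
      (hQ'.integrable_mul_increment₂₃ hΔ), hmart₂ Δ hΔ, hmart₂' Δ hΔ, smul_zero, smul_zero,
      add_zero]

lemma IsMM3.isMM2_map (hQ : IsMM3 Q μ₁ μ₂ μ₃) :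
    IsMM2 (Q.map fun p => (p.1, p.2.2)) μ₁ μ₃ := by
  obtain ⟨hP, hm₁, -, hm₃, hi₁, -, hi₃, hmart₁, hmart₂⟩ := id hQ
  have hproj : Measurable fun p : ℝ × ℝ × ℝ => (p.1, p.2.2) := by fun_prop
  refine ⟨Measure.isProbabilityMeasure_map hproj.aemeasurable, ?_, ?_, ?_, ?_, fun Δ hΔ => ?_⟩
  · rwa [Measure.map_map measurable_fst hproj]
  · rwa [Measure.map_map measurable_snd hproj]
  · exact (integrable_map_measure (by fun_prop) hproj.aemeasurable).2 hi₁
  · exact (integrable_map_measure (by fun_prop) hproj.aemeasurable).2 hi₃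
  obtain ⟨hΔc, M, hM⟩ := id hΔ
  have hΔ' : BddCont2 fun q : ℝ × ℝ => Δ q.1 := ⟨hΔc.comp continuous_fst, M, fun q => hM q.1⟩
  -- Tower property: `Δ(S₁)` is a test function for both increments `S₂ - S₁` and `S₃ - S₂`.
  calc ∫ p, Δ p.1 * (p.2 - p.1) ∂Q.map (fun p => (p.1, p.2.2))
      = ∫ p, (Δ p.1 * (p.2.1 - p.1) + Δ p.1 * (p.2.2 - p.2.1)) ∂Q := by
        rw [integral_map hproj.aemeasurable (by fun_prop)]
        congr 1 with p
        ring
    _ = 0 := by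
        rw [integral_add (hQ.integrable_mul_increment₁₂ hΔ) (hQ.integrable_mul_increment₂₃ hΔ'),
          hmart₁ Δ hΔ, hmart₂ _ hΔ', add_zero]

lemma motVal3_subset_motVal2 {c : ℝ × ℝ → ℝ} (hc : Continuous c) :
    MotVal3 μ₁ μ₂ μ₃ c ⊆ MotVal2 μ₁ μ₃ c := by
  rintro r ⟨Q, hQ, rfl⟩
  exact ⟨_, hQ.isMM2_map, (integral_map (by fun_prop) hc.aestronglyMeasurable).symm⟩

end Martingale

section LinearGrowth

variable {Q : Measure (ℝ × ℝ)} {μ₁ μ₃ : Measure ℝ} {c : ℝ × ℝ → ℝ}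

lemma IsMM2.integrable_linearBound (hQ : IsMM2 Q μ₁ μ₃) (L : ℝ) :
    Integrable (fun p : ℝ × ℝ => L * (1 + |p.1| + |p.2|)) Q := by
  obtain ⟨hP, -, -, hi₁, hi₂, -⟩ := hQ
  exact (((integrable_const 1).add hi₁.abs).add hi₂.abs).const_mul L

lemma IsMM2.integral_linearBound (hQ : IsMM2 Q μ₁ μ₃) (L : ℝ) :
    ∫ p : ℝ × ℝ, L * (1 + |p.1| + |p.2|) ∂Q = L * (1 + ∫ x, |x| ∂μ₁ + ∫ x, |x| ∂μ₃) := by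
  obtain ⟨hP, hm₁, hm₃, hi₁, hi₃, -⟩ := hQ
  have hi₁' : Integrable (fun p : ℝ × ℝ => 1 + |p.1|) Q := (integrable_const 1).add hi₁.abs
  rw [integral_const_mul, integral_add hi₁' hi₃.abs, integral_add (integrable_const 1) hi₁.abs,
    ← hm₁, ← hm₃,
    integral_map measurable_fst.aemeasurable (by fun_prop),
    integral_map measurable_snd.aemeasurable (by fun_prop)]
  simp

lemma CLin2.integrable (hc : CLin2 c) (hQ : IsMM2 Q μ₁ μ₃) : Integrable c Q := by
  obtain ⟨L, hL⟩ := hc.2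
  exact (hQ.integrable_linearBound L).mono' hc.1.aestronglyMeasurable (.of_forall hL)

lemma CLin2.integrable_of_isMM3 {Q : Measure (ℝ × ℝ × ℝ)} {μ₂ : Measure ℝ} (hc : CLin2 c)
    (hQ : IsMM3 Q μ₁ μ₂ μ₃) : Integrable (fun p : ℝ × ℝ × ℝ => c (p.1, p.2.2)) Q :=
  (integrable_map_measure hc.1.aestronglyMeasurable (by fun_prop)).1
    (hc.integrable hQ.isMM2_map)

lemma CLin2.bddBelow_motVal2 (hc : CLin2 c) : BddBelow (MotVal2 μ₁ μ₃ c) := by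
  obtain ⟨L, hL⟩ := hc.2
  refine ⟨-(L * (1 + ∫ x, |x| ∂μ₁ + ∫ x, |x| ∂μ₃)), ?_⟩
  rintro r ⟨Q, hQ, rfl⟩
  rw [← hQ.integral_linearBound L]
  exact neg_le_of_abs_le (norm_integral_le_of_norm_le (f := c) (hQ.integrable_linearBound L)
    (.of_forall hL))

end LinearGrowth

theorem stmt_6_general (μ₁ μ₃ : Measure ℝ)
    (c : ℝ × ℝ → ℝ) (hc : CLin2 c)
    (I : Set (Measure ℝ))
    (hI : I = {μ₂ : Measure ℝ | ConvOrder μ₁ μ₂ ∧ ConvOrder μ₂ μ₃ ∧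
      sInf (MotVal3 μ₁ μ₂ μ₃ c) = sInf (MotVal2 μ₁ μ₃ c)})
    (ν ν' : Measure ℝ)
    (hν : ν ∈ I) (hν' : ν' ∈ I)
    (hattν : ∃ Q : Measure (ℝ × ℝ × ℝ), IsMM3 Q μ₁ ν μ₃ ∧
      (∫ p : ℝ × ℝ × ℝ, c (p.1, p.2.2) ∂Q) = sInf (MotVal3 μ₁ ν μ₃ c))
    (hattν' : ∃ Q : Measure (ℝ × ℝ × ℝ), IsMM3 Q μ₁ ν' μ₃ ∧
      (∫ p : ℝ × ℝ × ℝ, c (p.1, p.2.2) ∂Q) = sInf (MotVal3 μ₁ ν' μ₃ c))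
    (lam : ℝ) (hlam : lam ∈ Set.Ioo (0 : ℝ) 1) :
    (ENNReal.ofReal lam • ν + ENNReal.ofReal (1 - lam) • ν') ∈ I := by
  show mixture lam ν ν' ∈ I
  have hlam' := Set.Ioo_subset_Icc_self hlam
  subst hI
  obtain ⟨hν₁, hν₃, hν_val⟩ := hν
  obtain ⟨hν'₁, hν'₃, hν'_val⟩ := hν'
  obtain ⟨Q, hQ, hQ_val⟩ := hattν
  obtain ⟨Q', hQ', hQ'_val⟩ := hattν'
  have hmix : IsMM3 (mixture lam Q Q') μ₁ (mixture lam ν ν') μ₃ := by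
    simpa only [Measure.mixture_self hlam'] using hQ.mixture hlam' hQ'
  have hopt : sInf (MotVal2 μ₁ μ₃ c) ∈ MotVal3 μ₁ (mixture lam ν ν') μ₃ c := by
    refine ⟨_, hmix, ?_⟩
    rw [integral_mixture hlam' (hc.integrable_of_isMM3 hQ) (hc.integrable_of_isMM3 hQ'),
      hQ_val, hQ'_val, hν_val, hν'_val, smul_eq_mul, smul_eq_mul]
    ring
  refine ⟨?_, ?_, ?_⟩
  · simpa only [Measure.mixture_self hlam'] using hν₁.mixture hlam hν'₁
  · simpa only [Measure.mixture_self hlam'] using hν₃.mixture hlam hν'₃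
  · exact IsLeast.csInf_eq
      ⟨hopt, fun r hr => csInf_le hc.bddBelow_motVal2 (motVal3_subset_motVal2 hc.1 hr)⟩

/-- The set of intermediate marginals that do not improve the lower price bound
is convex. -/
theorem stmt_6 (μ₁ μ₃ : Measure ℝ) [IsProbabilityMeasure μ₁] [IsProbabilityMeasure μ₃]
    (hμ₁ : Integrable (fun x : ℝ => x) μ₁) (hμ₃ : Integrable (fun x : ℝ => x) μ₃)
    (c : ℝ × ℝ → ℝ) (hc : CLin2 c)
    (hne : ∃ Q : Measure (ℝ × ℝ), IsMM2 Q μ₁ μ₃)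
    (I : Set (Measure ℝ))
    (hI : I = {μ₂ : Measure ℝ | ConvOrder μ₁ μ₂ ∧ ConvOrder μ₂ μ₃ ∧
      sInf (MotVal3 μ₁ μ₂ μ₃ c) = sInf (MotVal2 μ₁ μ₃ c)})
    (ν ν' : Measure ℝ) [IsProbabilityMeasure ν] [IsProbabilityMeasure ν']
    (hν : ν ∈ I) (hν' : ν' ∈ I)
    (hattν : ∃ Q : Measure (ℝ × ℝ × ℝ), IsMM3 Q μ₁ ν μ₃ ∧
      (∫ p : ℝ × ℝ × ℝ, c (p.1, p.2.2) ∂Q) = sInf (MotVal3 μ₁ ν μ₃ c))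
    (hattν' : ∃ Q : Measure (ℝ × ℝ × ℝ), IsMM3 Q μ₁ ν' μ₃ ∧
      (∫ p : ℝ × ℝ × ℝ, c (p.1, p.2.2) ∂Q) = sInf (MotVal3 μ₁ ν' μ₃ c))
    (lam : ℝ) (hlam : lam ∈ Set.Ioo (0 : ℝ) 1) :
    (ENNReal.ofReal lam • ν + ENNReal.ofReal (1 - lam) • ν') ∈ I :=
  stmt_6_general μ₁ μ₃ c hc I hI ν ν' hν hν' hattν hattν' lam hlam
end

section
/- Let μ₁ be the uniform distribution on [−1,1] and μ₂ := Law(S₂), where conditional on S₁ ∼ μ₁ the random variable S₂ equals S₁ with probability 1−t, equals (3/2)S₁ + 1/2 with probability (3/4)t, and equals −(1/2)S₁ − 3/2 with probability (1/4)t, for a fixed t ∈ [0,1]. Then for every bounded measurable u : ℝ → ℝ, E[u(S₂)] = (1−t)·E_{μ₁}[u] + t·E_{μ₃}[u], where μ₃ is the uniform distribution on [−2,2]. -/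
open MeasureTheory
open scoped ENNReal

/-!
The map `T_u x = 3/2 x + 1/2` sends `U([-1,1])` to `U([-1,2])`, with density `1/3`, and
`T_d x = -1/2 x - 3/2` sends it to `U([-2,-1])`, with density `1`. Weighted by `3/4` and `1/4`
both pieces have density `1/4`, so they glue to `U([-2,2])`; the `t`-mixture then integrates
linearly in `t`.
-/

theorem intervalIntegrable_of_norm_le {E : Type*} [NormedAddCommGroup E] {μ : Measure ℝ}
    [IsLocallyFiniteMeasure μ] {g : ℝ → E} (hg : AEStronglyMeasurable g μ) {M : ℝ}
    (hM : ∀ x, ‖g x‖ ≤ M) (a b : ℝ) : IntervalIntegrable g μ a b :=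
  (Measure.integrableOn_of_bounded isCompact_uIcc.measure_ne_top hg
    (ae_of_all _ hM)).intervalIntegrable

theorem integral_smul_restrict_Icc {E : Type*} [NormedAddCommGroup E] [NormedSpace ℝ E]
    (r : ℝ≥0∞) {a b : ℝ} (hab : a ≤ b) (g : ℝ → E) :
    ∫ x, g x ∂(r • volume.restrict (Set.Icc a b)) = r.toReal • ∫ x in a..b, g x := by
  rw [integral_smul_measure, integral_Icc_eq_integral_Ioc, intervalIntegral.integral_of_le hab]

theorem integral_uniform_two_map_coupling {g : ℝ → ℝ}
    (hg : IntervalIntegrable g volume (-2) 2) :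
    (3 / 4) * (∫ x in (-1 : ℝ)..1, g ((3 / 2) * x + 1 / 2))
      + (1 / 4) * (∫ x in (-1 : ℝ)..1, g (-(1 / 2) * x - 3 / 2))
      = (1 / 2) * ∫ x in (-2 : ℝ)..2, g x := by
  have h_up : ∫ x in (-1 : ℝ)..1, g ((3 / 2) * x + 1 / 2)
      = (2 / 3) * ∫ x in (-1 : ℝ)..2, g x := by
    rw [intervalIntegral.integral_comp_mul_add g (by norm_num : (3 / 2 : ℝ) ≠ 0)]
    norm_num
  have h_down : ∫ x in (-1 : ℝ)..1, g (-(1 / 2) * x - 3 / 2)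
      = 2 * ∫ x in (-2 : ℝ)..(-1), g x := by
    simp_rw [sub_eq_add_neg]
    rw [intervalIntegral.integral_comp_mul_add g (by norm_num : (-(1 / 2) : ℝ) ≠ 0),
      intervalIntegral.integral_symm]
    norm_num
  have h_mid : (-1 : ℝ) ∈ Set.uIcc (-2) 2 := by norm_num [Set.mem_uIcc]
  have h_glue : ∫ x in (-2 : ℝ)..2, g x
      = (∫ x in (-2 : ℝ)..(-1), g x) + ∫ x in (-1 : ℝ)..2, g x :=
    (intervalIntegral.integral_add_adjacent_intervals
      (hg.mono_set (Set.uIcc_subset_uIcc_left h_mid))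
      (hg.mono_set (Set.uIcc_subset_uIcc_right h_mid))).symm
  rw [h_up, h_down, h_glue]
  ring

theorem stmt_10_general (μ₁ μ₃ : Measure ℝ)
    (hμ₁ : μ₁ = ((2 : ℝ≥0∞)⁻¹) • volume.restrict (Set.Icc (-1 : ℝ) 1))
    (hμ₃ : μ₃ = ((4 : ℝ≥0∞)⁻¹) • volume.restrict (Set.Icc (-2 : ℝ) 2))
    (t : ℝ)
    (u : ℝ → ℝ) (hu : Measurable u) (hub : ∃ M : ℝ, ∀ x, |u x| ≤ M) :
    ∫ x, ((1 - t) * u x + (3 / 4) * t * u ((3 / 2) * x + 1 / 2)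
        + (1 / 4) * t * u (-(1 / 2) * x - 3 / 2)) ∂μ₁
      = (1 - t) * (∫ x, u x ∂μ₁) + t * (∫ x, u x ∂μ₃) := by
  obtain ⟨M, hM⟩ := hub
  have hu_comp {f : ℝ → ℝ} (hf : Measurable f) :
      IntervalIntegrable (fun x => u (f x)) volume (-1) 1 :=
    intervalIntegrable_of_norm_le (hu.comp hf).aestronglyMeasurable (fun x => hM (f x)) _ _
  have hu₀ := intervalIntegrable_of_norm_le (μ := volume) hu.aestronglyMeasurable hM (-1) 1
  have hu_up := hu_comp (f := fun x => (3 / 2) * x + 1 / 2) (by fun_prop)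
  have hu_down := hu_comp (f := fun x => -(1 / 2) * x - 3 / 2) (by fun_prop)
  have hcoupling := integral_uniform_two_map_coupling
    (intervalIntegrable_of_norm_le hu.aestronglyMeasurable hM (-2) 2)
  subst hμ₁ hμ₃
  simp only [integral_smul_restrict_Icc _ (by norm_num : (-1 : ℝ) ≤ 1),
    integral_smul_restrict_Icc _ (by norm_num : (-2 : ℝ) ≤ 2), smul_eq_mul]
  rw [intervalIntegral.integral_add ((hu₀.const_mul _).add (hu_up.const_mul _))
      (hu_down.const_mul _),
    intervalIntegral.integral_add (hu₀.const_mul _) (hu_up.const_mul _),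
    intervalIntegral.integral_const_mul, intervalIntegral.integral_const_mul,
    intervalIntegral.integral_const_mul]
  simp only [ENNReal.toReal_inv, ENNReal.toReal_ofNat]
  linear_combination (t / 2) * hcoupling

/-- The martingale linear interpolation of `U([-1,1])` towards `U([-2,2])`:
for every bounded measurable test function `u`, the expectation of `u(S₂)`
equals the `(1-t, t)`-mixture of the expectations under `μ₁` and `μ₃`. -/
theorem stmt_10 (μ₁ μ₃ : Measure ℝ)
    (hμ₁ : μ₁ = ((2 : ℝ≥0∞)⁻¹) • volume.restrict (Set.Icc (-1 : ℝ) 1))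
    (hμ₃ : μ₃ = ((4 : ℝ≥0∞)⁻¹) • volume.restrict (Set.Icc (-2 : ℝ) 2))
    (t : ℝ) (ht : t ∈ Set.Icc (0 : ℝ) 1)
    (u : ℝ → ℝ) (hu : Measurable u) (hub : ∃ M : ℝ, ∀ x, |u x| ≤ M) :
    ∫ x, ((1 - t) * u x + (3 / 4) * t * u ((3 / 2) * x + 1 / 2)
        + (1 / 4) * t * u (-(1 / 2) * x - 3 / 2)) ∂μ₁
      = (1 - t) * (∫ x, u x ∂μ₁) + t * (∫ x, u x ∂μ₃) :=
  stmt_10_general μ₁ μ₃ hμ₁ hμ₃ t u hu hub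
end

section
/- With strikes, prices, weights w_j and the discrete measure μ* = Σⱼ w_j δ_{K_j} as in the discrete Breeden–Litzenberger construction (0 = K₀ < ⋯ < K_m, S₀ = Π₀ ≥ ⋯ ≥ Π_m = 0, convex prices, boundary slope conventions 0 and −1), it holds that ∫(x − K_j)⁺ dμ*(x) = Π_j for every j = 0,…,m. -/
/-!
The weights `w_k` are second differences of the prices, so their tail sums telescope:
`∑_{k > j} w_k` is minus the right slope of the prices at `K_j` (the slope after `K_m` being `0`).
Hence between consecutive strikes the price `∑_k w_k (K_k - K_j)⁺` of the call under `μ*` drops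
by `(K_{j+1} - K_j) · (-slope) = Π_j - Π_{j+1}`, and it vanishes at `K_m`, as `Π_m` does; downward
induction on `j` gives the claim. Monotonicity and convexity of the prices make the weights
nonnegative, so `μ*` is a genuine measure carrying exactly these weights.
-/

open MeasureTheory
open scoped ENNReal

/-- Right slope `(Π_{j+1} - Π_j)/(K_{j+1} - K_j)` of the call prices, with the
convention that the slope to the right of the last strike is `0`. -/
noncomputable def rslope (m : ℕ) (K P : ℕ → ℝ) (j : ℕ) : ℝ :=
  if j < m then (P (j + 1) - P j) / (K (j + 1) - K j) else 0

/-- Left slope, with the convention that the slope to the left of the first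
strike is `-1`. -/
noncomputable def lslope (m : ℕ) (K P : ℕ → ℝ) (j : ℕ) : ℝ :=
  if j = 0 then -1 else rslope m K P (j - 1)

/-- The Breeden–Litzenberger weights. -/
noncomputable def wBL (m : ℕ) (K P : ℕ → ℝ) (j : ℕ) : ℝ :=
  rslope m K P j - lslope m K P j

theorem integral_finset_sum_smul_dirac {α ι E : Type*} [MeasurableSpace α]
    [MeasurableSingletonClass α] [NormedAddCommGroup E] [NormedSpace ℝ E] [CompleteSpace E]
    (s : Finset ι) (w : ι → ℝ) (hw : ∀ k ∈ s, 0 ≤ w k) (x : ι → α) (f : α → E) :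
    ∫ y, f y ∂(∑ k ∈ s, ENNReal.ofReal (w k) • Measure.dirac (x k)) = ∑ k ∈ s, w k • f (x k) := by
  rw [integral_finsetSum_measure fun k _ ↦
    (integrable_dirac enorm_lt_top).smul_measure ENNReal.ofReal_ne_top]
  refine Finset.sum_congr rfl fun k hk ↦ ?_
  rw [integral_smul_measure, integral_dirac, ENNReal.toReal_ofReal (hw k hk)]

theorem sum_mul_call_sub_sum_mul_call_succ {m j : ℕ} {K : ℕ → ℝ} (w : ℕ → ℝ)
    (hK : MonotoneOn K (Set.Iic m)) (hj : j < m) :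
    ∑ k ∈ Finset.range (m + 1), w k * max (K k - K j) 0
      - ∑ k ∈ Finset.range (m + 1), w k * max (K k - K (j + 1)) 0
      = (K (j + 1) - K j) * ∑ k ∈ Finset.Ico (j + 1) (m + 1), w k := by
  have hKj : K j ≤ K (j + 1) := hK (by simp; omega) (by simp; omega) (by omega)
  rw [← Finset.sum_sub_distrib, ← Finset.sum_range_add_sum_Ico _ (by omega : j + 1 ≤ m + 1),
    Finset.mul_sum]
  have below : ∑ k ∈ Finset.range (j + 1),
      (w k * max (K k - K j) 0 - w k * max (K k - K (j + 1)) 0) = 0 := by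
    refine Finset.sum_eq_zero fun k hk ↦ ?_
    have : K k ≤ K j := hK (by simp at hk ⊢; omega) (by simp; omega) (by simp at hk; omega)
    rw [max_eq_right (by linarith), max_eq_right (by linarith)]
    ring
  rw [below, zero_add]
  refine Finset.sum_congr rfl fun k hk ↦ ?_
  simp only [Finset.mem_Ico] at hk
  have : K (j + 1) ≤ K k := hK (by simp; omega) (by simp; omega) hk.1
  rw [max_eq_left (by linarith), max_eq_left (by linarith)]
  ring

section BreedenLitzenberger

variable {m : ℕ} {K P : ℕ → ℝ}

theorem rslope_nonpos (hK : ∀ j < m, K j ≤ K (j + 1)) (hP : ∀ j < m, P (j + 1) ≤ P j) (j : ℕ) :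
    rslope m K P j ≤ 0 := by
  unfold rslope
  split_ifs with hj
  · exact div_nonpos_of_nonpos_of_nonneg (by linarith [hP j hj]) (by linarith [hK j hj])
  · exact le_rfl

theorem lslope_nonpos (hK : ∀ j < m, K j ≤ K (j + 1)) (hP : ∀ j < m, P (j + 1) ≤ P j) (j : ℕ) :
    lslope m K P j ≤ 0 := by
  unfold lslope
  split_ifs
  · norm_num
  · exact rslope_nonpos hK hP _

theorem wBL_nonneg (hK : ∀ j < m, K j ≤ K (j + 1)) (hP : ∀ j < m, P (j + 1) ≤ P j)
    (hconv : ∀ j < m, lslope m K P j ≤ rslope m K P j) {k : ℕ} (hk : k ≤ m) :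
    0 ≤ wBL m K P k := by
  unfold wBL
  rcases hk.lt_or_eq with hk | rfl
  · exact sub_nonneg.mpr (hconv k hk)
  · simp only [rslope, lt_irrefl, if_false, zero_sub, neg_nonneg]
    exact lslope_nonpos hK hP k

theorem sum_Ico_wBL {j : ℕ} (hj : j ≤ m) :
    ∑ k ∈ Finset.Ico (j + 1) (m + 1), wBL m K P k = -rslope m K P j := by
  have hw : ∀ i ∈ Finset.Ico j m, wBL m K P (i + 1) = rslope m K P (i + 1) - rslope m K P i :=
    fun i _ ↦ by simp [wBL, lslope]
  rw [← Finset.sum_Ico_add', Finset.sum_congr rfl hw, Finset.sum_Ico_sub (f := rslope m K P) hj]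
  simp [rslope]

theorem sum_wBL_mul_call (hK : ∀ j < m, K j < K (j + 1)) (hPm : P m = 0) {j : ℕ} (hj : j ≤ m) :
    ∑ k ∈ Finset.range (m + 1), wBL m K P k * max (K k - K j) 0 = P j := by
  have hKmono : MonotoneOn K (Set.Iic m) :=
    (strictMonoOn_Iic_of_lt_succ fun j hj ↦ by simpa using hK j hj).monotoneOn
  induction hj using Nat.decreasingInduction with
  | self =>
    rw [hPm]
    refine Finset.sum_eq_zero fun k hk ↦ ?_
    have : K k ≤ K m := hKmono (by simp at hk ⊢; omega) (by simp) (by simp at hk; omega)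
    rw [max_eq_right (by linarith), mul_zero]
  | of_succ j hj ih =>
    have step := sum_mul_call_sub_sum_mul_call_succ (wBL m K P) hKmono hj
    rw [ih, sum_Ico_wBL hj.le, rslope, if_pos hj,
      mul_neg, mul_div_cancel₀ _ (sub_ne_zero.mpr (hK j hj).ne')] at step
    linarith

end BreedenLitzenberger

theorem stmt_14_general (m : ℕ) (K P : ℕ → ℝ)
    (hKmono : ∀ j < m, K j < K (j + 1))
    (hPm : P m = 0) (hPdec : ∀ j < m, P (j + 1) ≤ P j)
    (hconv : ∀ j < m, lslope m K P j ≤ rslope m K P j) :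
    ∀ j ≤ m,
      (∫ x, max (x - K j) 0
        ∂(∑ k ∈ Finset.range (m + 1),
            ENNReal.ofReal (wBL m K P k) • Measure.dirac (K k))) = P j := by
  intro j hj
  have hw : ∀ k ∈ Finset.range (m + 1), 0 ≤ wBL m K P k := fun k hk ↦
    wBL_nonneg (fun i hi ↦ (hKmono i hi).le) hPdec hconv (Finset.mem_range_succ_iff.mp hk)
  rw [integral_finset_sum_smul_dirac _ _ hw]
  exact sum_wBL_mul_call hKmono hPm hj

/-- The discrete Breeden–Litzenberger measure reprices all the given call
options exactly. -/
theorem stmt_14 (m : ℕ) (hm : 1 ≤ m) (K P : ℕ → ℝ) (S₀ : ℝ)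
    (hK0 : K 0 = 0) (hKmono : ∀ j < m, K j < K (j + 1))
    (hP0 : P 0 = S₀) (hPm : P m = 0) (hPdec : ∀ j < m, P (j + 1) ≤ P j)
    (hconv : ∀ j < m, lslope m K P j ≤ rslope m K P j) :
    ∀ j ≤ m,
      (∫ x, max (x - K j) 0
        ∂(∑ k ∈ Finset.range (m + 1),
            ENNReal.ofReal (wBL m K P k) • Measure.dirac (K k))) = P j :=
  stmt_14_general m K P hKmono hPm hPdec hconv
end
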